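/- arXiv:2102.13638 — 2 statements merged into one kernel-verified Lean document; each statement's English description precedes it below -/
import Mathlib

section
/- Conditional-to-unconditional convergence in distribution (Lemma B.3): Let (Z_n, X_n), n = 1,2,…, and Z be random variables on a probability space (Ω, ℬ, μ), with Z_n and Z taking values in a Euclidean space and X_n taking values in a standard Borel space 𝒳_n. Let F_n : 𝒳_n → ℝ be measurable with F_n(X_n) → 0 in probability. Suppose that, for every nonrandom sequence x_n ∈ 𝒳_n with F_n(x_n) → 0, the conditional distribution of Z_n given X_n = x_n (a fixed regular conditional distribution of Z_n given X_n, evaluated at x_n) converges weakly to the law of Z. Then Z_n converges in distribution to Z unconditionally. -/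
/-!
Write `E f(Z_n) = E g_n(X_n)` with `g_n x = ∫ f dκ_n(x)`. By a diagonal argument, convergence in
probability comes with a rate: `P(|F_n(X_n)| > e_n) → 0` for some deterministic `e_n → 0`.
Applying the hypothesis to points `x_n` that nearly maximise `|g_n - E f(Z)|` on `{|F_n| ≤ e_n}`
shows that this supremum tends to `0`; off that set `g_n` is bounded and the set has vanishing
probability.
-/

open MeasureTheory ProbabilityTheory Filter Topology

theorem Filter.exists_tendsto_atTop_tendsto_apply {α : Type*} {l : Filter α}
    [l.IsCountablyGenerated] {p : ℕ → ℕ → α} (hp : ∀ k, Tendsto (fun n => p n k) atTop l) :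
    ∃ c : ℕ → ℕ, Tendsto c atTop atTop ∧ Tendsto (fun n => p n (c n)) atTop l := by
  obtain ⟨U, hU⟩ := l.exists_antitone_basis
  choose N hN using fun k => eventually_atTop.1 ((hp k).eventually (hU.mem k))
  let c : ℕ → ℕ := fun n => Nat.findGreatest (fun k => ∀ j ≤ k, N j ≤ n) n
  have hc : ∀ i, ∀ᶠ n in atTop, i ≤ c n ∧ N (c n) ≤ n := by
    intro i
    have hNi : ∀ᶠ n in atTop, ∀ j ∈ Set.Iic i, N j ≤ n :=
      (eventually_all_finite (Set.finite_Iic i)).2 fun j _ => eventually_ge_atTop (N j)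
    filter_upwards [eventually_ge_atTop i, hNi] with n hin hNn
    have hPi : ∀ j ≤ i, N j ≤ n := hNn
    exact ⟨Nat.le_findGreatest hin hPi,
      Nat.findGreatest_spec (P := fun k => ∀ j ≤ k, N j ≤ n) hin hPi _ le_rfl⟩
  refine ⟨c, tendsto_atTop.2 fun i => (hc i).mono fun n h => h.1,
    hU.tendsto_right_iff.2 fun i _ => (hc i).mono fun n h => hU.antitone h.1 (hN _ n h.2)⟩

theorem Set.Nonempty.exists_mem_forall_le_add {α : Type*} {s : Set α} (hs : s.Nonempty)
    {f : α → ℝ} (hf : BddAbove (f '' s)) {ε : ℝ} (hε : 0 < ε) :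
    ∃ x ∈ s, ∀ y ∈ s, f y ≤ f x + ε := by
  obtain ⟨_, ⟨x, hx, rfl⟩, hlt⟩ := exists_lt_of_lt_csSup (hs.image f) (sub_lt_self _ hε)
  exact ⟨x, hx, fun y hy => by linarith [le_csSup hf (Set.mem_image_of_mem f hy)]⟩

theorem exists_tendsto_zero_forall_abs_sub_le {Ω : Type*} {Y V : ℕ → Ω → ℝ} {L : ℝ}
    {e : ℕ → ℝ} (hbdd : ∀ n, BddAbove (Set.range fun ω => |Y n ω - L|))
    (he : Tendsto e atTop (𝓝 0)) (hne : ∀ᶠ n in atTop, ∃ ω, |V n ω| ≤ e n)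
    (hseq : ∀ ω : ℕ → Ω, Tendsto (fun n => V n (ω n)) atTop (𝓝 0) →
      Tendsto (fun n => Y n (ω n)) atTop (𝓝 L)) :
    ∃ a : ℕ → ℝ, Tendsto a atTop (𝓝 0) ∧
      ∀ᶠ n in atTop, ∀ ω, |V n ω| ≤ e n → |Y n ω - L| ≤ a n := by
  obtain ⟨_, ω₀, -⟩ := hne.exists
  have hmax : ∀ n, ∃ ω, (∃ ω, |V n ω| ≤ e n) →
      |V n ω| ≤ e n ∧ ∀ ω', |V n ω'| ≤ e n → |Y n ω' - L| ≤ |Y n ω - L| + 1 / ((n : ℝ) + 1) := by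
    intro n
    by_cases hn : ∃ ω, |V n ω| ≤ e n
    · obtain ⟨ω, hω, h⟩ := Set.Nonempty.exists_mem_forall_le_add hn
        ((hbdd n).mono (Set.image_subset_range _ _)) Nat.one_div_pos_of_nat
      exact ⟨ω, fun _ => ⟨hω, h⟩⟩
    · exact ⟨ω₀, fun h => absurd h hn⟩
  choose ω hω using hmax
  have hVω : Tendsto (fun n => V n (ω n)) atTop (𝓝 0) := by
    rw [tendsto_zero_iff_abs_tendsto_zero]
    refine squeeze_zero' (.of_forall fun n => abs_nonneg _) ?_ he
    filter_upwards [hne] with n hn using (hω n hn).1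
  have hYω : Tendsto (fun n => |Y n (ω n) - L|) atTop (𝓝 0) := by
    simpa using ((hseq ω hVω).sub_const L).abs
  refine ⟨fun n => |Y n (ω n) - L| + 1 / ((n : ℝ) + 1), ?_, ?_⟩
  · simpa using hYω.add tendsto_one_div_add_atTop_nhds_zero_nat
  · filter_upwards [hne] with n hn using (hω n hn).2

namespace MeasureTheory

variable {Ω : Type*} [MeasurableSpace Ω] {μ : Measure Ω}

theorem exists_tendsto_zero_measure_lt_abs {V : ℕ → Ω → ℝ}
    (hV : ∀ ε > (0:ℝ), Tendsto (fun n => μ {ω | ε < |V n ω|}) atTop (𝓝 0)) :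
    ∃ e : ℕ → ℝ, Tendsto e atTop (𝓝 0) ∧
      Tendsto (fun n => μ {ω | e n < |V n ω|}) atTop (𝓝 0) := by
  obtain ⟨c, hc, hcV⟩ := Filter.exists_tendsto_atTop_tendsto_apply
    (p := fun n k => μ {ω | 1 / ((k : ℝ) + 1) < |V n ω|}) fun k => hV _ Nat.one_div_pos_of_nat
  exact ⟨_, tendsto_one_div_add_atTop_nhds_zero_nat.comp hc, hcV⟩

theorem norm_integral_le_add_mul_measureReal_compl {E : Type*} [NormedAddCommGroup E]
    [NormedSpace ℝ E] [IsProbabilityMeasure μ] {h : Ω → E} (hh : AEStronglyMeasurable h μ)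
    {s : Set Ω} (hs : MeasurableSet s) {a b : ℝ} (ha0 : 0 ≤ a) (ha : ∀ ω ∈ s, ‖h ω‖ ≤ a)
    (hb : ∀ ω, ‖h ω‖ ≤ b) :
    ‖∫ ω, h ω ∂μ‖ ≤ a + b * μ.real sᶜ := by
  rw [← integral_add_compl hs (.of_bound hh b (.of_forall hb))]
  calc ‖(∫ ω in s, h ω ∂μ) + ∫ ω in sᶜ, h ω ∂μ‖
      ≤ a * μ.real s + b * μ.real sᶜ :=
        (norm_add_le _ _).trans <| add_le_add
          (norm_setIntegral_le_of_norm_le_const (measure_lt_top _ _) ha)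
          (norm_setIntegral_le_of_norm_le_const (measure_lt_top _ _) fun ω _ => hb ω)
    _ ≤ a + b * μ.real sᶜ := by
        gcongr
        exact mul_le_of_le_one_right ha0 measureReal_le_one

theorem tendsto_integral_of_forall_seq_tendsto [IsProbabilityMeasure μ] {Y V : ℕ → Ω → ℝ}
    {L C : ℝ} (hY : ∀ n, AEStronglyMeasurable (Y n) μ) (hYC : ∀ n ω, |Y n ω| ≤ C)
    (hV : ∀ n, Measurable (V n))
    (hVprob : ∀ ε > (0:ℝ), Tendsto (fun n => μ {ω | ε < |V n ω|}) atTop (𝓝 0))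
    (hseq : ∀ ω : ℕ → Ω, Tendsto (fun n => V n (ω n)) atTop (𝓝 0) →
      Tendsto (fun n => Y n (ω n)) atTop (𝓝 L)) :
    Tendsto (fun n => ∫ ω, Y n ω ∂μ) atTop (𝓝 L) := by
  obtain ⟨e, he, heV⟩ := exists_tendsto_zero_measure_lt_abs hVprob
  have hGc : ∀ n, {ω | |V n ω| ≤ e n}ᶜ = {ω | e n < |V n ω|} := fun n => by ext; simp
  have hne : ∀ᶠ n in atTop, ∃ ω, |V n ω| ≤ e n := by
    filter_upwards [heV.eventually (gt_mem_nhds zero_lt_one)] with n hn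
    by_contra! hG
    simp [hG] at hn
  have hYL : ∀ n ω, |Y n ω - L| ≤ C + |L| := fun n ω =>
    (abs_sub _ _).trans (add_le_add_left (hYC n ω) _)
  obtain ⟨a, ha, hYa⟩ := exists_tendsto_zero_forall_abs_sub_le
    (fun n => ⟨C + |L|, Set.forall_mem_range.2 (hYL n)⟩) he hne hseq
  have hμ : Tendsto (fun n => μ.real {ω | e n < |V n ω|}) atTop (𝓝 0) := by
    simpa [Function.comp_def, measureReal_def] using
      (ENNReal.tendsto_toReal ENNReal.zero_ne_top).comp heV
  have hbound : ∀ᶠ n in atTop,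
      ‖∫ ω, Y n ω ∂μ - L‖ ≤ a n + (C + |L|) * μ.real {ω | e n < |V n ω|} := by
    filter_upwards [hYa, hne] with n hYan ⟨ω, hω⟩
    have hsub : ∫ ω, Y n ω ∂μ - L = ∫ ω, (Y n ω - L) ∂μ := by
      simp [integral_sub (.of_bound (hY n) C (.of_forall (hYC n))) (integrable_const L)]
    rw [hsub, ← hGc]
    exact norm_integral_le_add_mul_measureReal_compl ((hY n).sub aestronglyMeasurable_const)
      (measurableSet_le (hV n).abs measurable_const) ((abs_nonneg _).trans (hYan ω hω))
      (fun ω' hω' => hYan ω' hω') (hYL n)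
  rw [tendsto_iff_norm_sub_tendsto_zero]
  refine squeeze_zero' (.of_forall fun n => norm_nonneg _) hbound ?_
  simpa using ha.add (hμ.const_mul (C + |L|))

section Disintegration

variable {α β : Type*} [MeasurableSpace α] [MeasurableSpace β] [IsFiniteMeasure μ]
  {X : Ω → α} {Z : Ω → β} {κ : Kernel α β} [IsSFiniteKernel κ]

theorem Measure.map_prodMk_eq_compProd (hX : Measurable X) (hZ : Measurable Z)
    (hdisint : ∀ A B, MeasurableSet A → MeasurableSet B →
      μ (Z ⁻¹' B ∩ X ⁻¹' A) = ∫⁻ x in A, κ x B ∂μ.map X) :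
    μ.map (fun ω => (X ω, Z ω)) = μ.map X ⊗ₘ κ := by
  refine Measure.ext_prod fun {A B} hA hB => ?_
  rw [Measure.map_apply (hX.prodMk hZ) (hA.prod hB), Measure.compProd_apply_prod hA hB,
    Set.mk_preimage_prod, Set.inter_comm, hdisint A B hA hB]

theorem integral_comp_eq_integral_integral_kernel (hX : Measurable X) (hZ : Measurable Z)
    (hdisint : ∀ A B, MeasurableSet A → MeasurableSet B →
      μ (Z ⁻¹' B ∩ X ⁻¹' A) = ∫⁻ x in A, κ x B ∂μ.map X)
    {E : Type*} [NormedAddCommGroup E] [NormedSpace ℝ E] {f : β → E}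
    (hf : StronglyMeasurable f) (hfi : Integrable (fun ω => f (Z ω)) μ) :
    ∫ ω, f (Z ω) ∂μ = ∫ ω, ∫ z, f z ∂κ (X ω) ∂μ := by
  have hXZ := hX.prodMk hZ
  have hcomp := Measure.map_prodMk_eq_compProd hX hZ hdisint
  have hf_snd : AEStronglyMeasurable (fun p : α × β => f p.2) (μ.map fun ω => (X ω, Z ω)) :=
    (hf.comp_measurable measurable_snd).aestronglyMeasurable
  have hfi' : Integrable (fun p : α × β => f p.2) (μ.map X ⊗ₘ κ) := by
    rwa [← hcomp, integrable_map_measure hf_snd hXZ.aemeasurable]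
  calc ∫ ω, f (Z ω) ∂μ = ∫ p, f p.2 ∂(μ.map fun ω => (X ω, Z ω)) :=
        (integral_map hXZ.aemeasurable hf_snd).symm
    _ = ∫ x, ∫ z, f z ∂κ x ∂μ.map X := by rw [hcomp, Measure.integral_compProd hfi']
    _ = ∫ ω, ∫ z, f z ∂κ (X ω) ∂μ :=
        integral_map hX.aemeasurable hf.integral_kernel.aestronglyMeasurable

end Disintegration

end MeasureTheory

namespace PermTestPaper

theorem conditional_clt_to_unconditional_general
    (d : ℕ) {Ω : Type*} [MeasurableSpace Ω] (μ : Measure Ω) [IsProbabilityMeasure μ]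
    (𝒳 : ℕ → Type*) [∀ n, MeasurableSpace (𝒳 n)]
    (Z : ℕ → Ω → (Fin d → ℝ)) (Zlim : Ω → (Fin d → ℝ))
    (X : (n : ℕ) → Ω → 𝒳 n)
    (hZmeas : ∀ n, Measurable (Z n))
    (hXmeas : ∀ n, Measurable (X n))
    (F : (n : ℕ) → 𝒳 n → ℝ) (hFmeas : ∀ n, Measurable (F n))
    -- `F_n(X_n) → 0` in probability
    (hFprob : ∀ ε > (0:ℝ),
      Tendsto (fun n => μ {ω | ε < |F n (X n ω)|}) atTop (nhds 0))
    -- `κ n` is a regular conditional distribution of `Z_n` given `X_n`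
    (κ : (n : ℕ) → Kernel (𝒳 n) (Fin d → ℝ)) (hκ : ∀ n, IsMarkovKernel (κ n))
    (hdisint : ∀ n, ∀ B : Set (Fin d → ℝ), ∀ A : Set (𝒳 n),
      MeasurableSet B → MeasurableSet A →
      μ {ω | Z n ω ∈ B ∧ X n ω ∈ A} = ∫⁻ x in A, κ n x B ∂(μ.map (X n)))
    -- conditional convergence in distribution along every `F_n`-null deterministic sequence
    (hcond : ∀ x : (n : ℕ) → 𝒳 n,
      Tendsto (fun n => F n (x n)) atTop (nhds 0) →
      ∀ f : BoundedContinuousFunction (Fin d → ℝ) ℝ,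
        Tendsto (fun n => ∫ z, f z ∂(κ n (x n))) atTop
          (nhds (∫ ω, f (Zlim ω) ∂μ))) :
    -- unconditional convergence in distribution
    ∀ f : BoundedContinuousFunction (Fin d → ℝ) ℝ,
      Tendsto (fun n => ∫ ω, f (Z n ω) ∂μ) atTop (nhds (∫ ω, f (Zlim ω) ∂μ)) := by
  intro f
  have hf := f.continuous.measurable.stronglyMeasurable
  have hmix : ∀ n, ∫ ω, f (Z n ω) ∂μ = ∫ ω, ∫ z, f z ∂κ n (X n ω) ∂μ := fun n =>
    have := hκ n
    integral_comp_eq_integral_integral_kernel (hXmeas n) (hZmeas n)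
      (fun A B hA hB => hdisint n B A hB hA) hf
      (.of_bound (hf.comp_measurable (hZmeas n)).aestronglyMeasurable ‖f‖
        (.of_forall fun ω => f.norm_coe_le_norm _))
  simp_rw [hmix]
  refine tendsto_integral_of_forall_seq_tendsto (C := ‖f‖)
    (fun n => (hf.integral_kernel.comp_measurable (hXmeas n)).aestronglyMeasurable)
    (fun n ω => ?_) (fun n => (hFmeas n).comp (hXmeas n)) hFprob
    (fun ω hω => hcond (fun n => X n (ω n)) hω f)
  have := hκ n
  exact f.norm_integral_le_norm (κ n (X n ω))

/-- **Lemma B.3**: let `(Z_n, X_n)` and `Z` live on a common probability space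
`(Ω, ℬ, μ)`, with `Z_n, Z` valued in the Euclidean space `ℝ^d` and `X_n` valued in a
standard Borel space `𝒳 n`.  Let `F_n : 𝒳 n → ℝ` be measurable with `F_n(X_n) → 0`
in probability, and let `κ n` be a regular conditional distribution of `Z_n` given
`X_n`.  If for every nonrandom sequence `x_n ∈ 𝒳 n` with `F_n(x_n) → 0` the
conditional laws `κ n (x n)` converge weakly to the law of `Z`, then `Z_n` converges
in distribution to `Z` unconditionally.  (Weak convergence is phrased via bounded
continuous test functions.) -/
theorem conditional_clt_to_unconditional
    (d : ℕ) {Ω : Type*} [MeasurableSpace Ω] (μ : Measure Ω) [IsProbabilityMeasure μ]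
    (𝒳 : ℕ → Type*) [∀ n, MeasurableSpace (𝒳 n)] [∀ n, StandardBorelSpace (𝒳 n)]
    (Z : ℕ → Ω → (Fin d → ℝ)) (Zlim : Ω → (Fin d → ℝ))
    (X : (n : ℕ) → Ω → 𝒳 n)
    (hZmeas : ∀ n, Measurable (Z n)) (hZlimmeas : Measurable Zlim)
    (hXmeas : ∀ n, Measurable (X n))
    (F : (n : ℕ) → 𝒳 n → ℝ) (hFmeas : ∀ n, Measurable (F n))
    -- `F_n(X_n) → 0` in probability
    (hFprob : ∀ ε > (0:ℝ),
      Tendsto (fun n => μ {ω | ε < |F n (X n ω)|}) atTop (nhds 0))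
    -- `κ n` is a regular conditional distribution of `Z_n` given `X_n`
    (κ : (n : ℕ) → Kernel (𝒳 n) (Fin d → ℝ)) (hκ : ∀ n, IsMarkovKernel (κ n))
    (hdisint : ∀ n, ∀ B : Set (Fin d → ℝ), ∀ A : Set (𝒳 n),
      MeasurableSet B → MeasurableSet A →
      μ {ω | Z n ω ∈ B ∧ X n ω ∈ A} = ∫⁻ x in A, κ n x B ∂(μ.map (X n)))
    -- conditional convergence in distribution along every `F_n`-null deterministic sequence
    (hcond : ∀ x : (n : ℕ) → 𝒳 n,
      Tendsto (fun n => F n (x n)) atTop (nhds 0) →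
      ∀ f : BoundedContinuousFunction (Fin d → ℝ) ℝ,
        Tendsto (fun n => ∫ z, f z ∂(κ n (x n))) atTop
          (nhds (∫ ω, f (Zlim ω) ∂μ))) :
    -- unconditional convergence in distribution
    ∀ f : BoundedContinuousFunction (Fin d → ℝ) ℝ,
      Tendsto (fun n => ∫ ω, f (Z n ω) ∂μ) atTop (nhds (∫ ω, f (Zlim ω) ∂μ)) :=
  conditional_clt_to_unconditional_general d μ 𝒳 Z Zlim X hZmeas hXmeas F hFmeas hFprob κ hκ hdisint
    hcond

end PermTestPaper
end

section
/- Uniform convergence of random CDFs (Lemma B.5, a Pólya-type theorem in probability): Let (F_n) be a sequence of random cumulative distribution functions (for each ω, F_n(·, ω) : ℝ → [0,1] is non-decreasing and right-continuous with limits 0 at −∞ and 1 at +∞) that converges pointwise in probability to a deterministic continuous CDF F, i.e., for every x ∈ ℝ, F_n(x) → F(x) in probability. Then the convergence is uniform in probability: sup_{x∈ℝ} |F_n(x) − F(x)| → 0 in probability. -/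
/-!
Pólya's argument. Cut the range of the continuous CDF `G` into `N` levels `i / N` and pick points
`c i` with `G (c i) = i / N`. Every `x` lies between the grid points whose levels are the
nearest ones strictly below and strictly above `G x`, so the monotonicity of `F n ω` gives
`sup_x |F n ω x - G x| ≤ 1 / N + max_i |F n ω (c i) - G (c i)|`.
Hence the event `sup_x |F n ω x - G x| > ε` lies in a finite union of events
`|F n ω (c i) - G (c i)| > ε / 2`, each of which has vanishing probability.
-/

open MeasureTheory Filter Set Topology

namespace PermTestPaper

lemma Ioo_subset_range_of_tendsto {G : ℝ → ℝ} (hG : Continuous G) {a b : ℝ}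
    (hbot : Tendsto G atBot (𝓝 a)) (htop : Tendsto G atTop (𝓝 b)) : Ioo a b ⊆ range G :=
  fun _ hy => mem_range_of_exists_le_of_exists_ge hG
    ((hbot.eventually (eventually_le_nhds hy.1)).exists)
    ((htop.eventually (eventually_ge_nhds hy.2)).exists)

section Grid

variable {f G : ℝ → ℝ} {N : ℕ} {c : ℤ → ℝ} {η : ℝ}

lemma le_add_of_grid (hf : Monotone f) (hf1 : ∀ t, f t ≤ 1) (hG : Monotone G)
    (hG0 : ∀ t, 0 ≤ G t) (hN : 0 < N) (hc : ∀ i : ℤ, 0 < i → i < N → G (c i) = i / N)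
    (hclose : ∀ i : ℤ, 0 < i → i < N → f (c i) ≤ G (c i) + η) (hη : 0 ≤ η) (t : ℝ) :
    f t ≤ G t + 1 / N + η := by
  have hN' : (0 : ℝ) < N := Nat.cast_pos.mpr hN
  -- a level strictly above `G t`, so that `t < c j` even where `G` is flat
  set j := ⌊N * G t⌋ + 1
  have hj_gt : (N : ℝ) * G t < j := by push_cast [j]; exact Int.lt_floor_add_one _
  have hj_le : (j : ℝ) ≤ N * G t + 1 := by
    push_cast [j]; linarith [Int.floor_le ((N : ℝ) * G t)]
  have hj_pos : 0 < j :=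
    Int.lt_add_one_iff.mpr (Int.floor_nonneg.mpr (mul_nonneg hN'.le (hG0 t)))
  rcases lt_or_ge j N with hjN | hjN
  · have hGj : G (c j) = j / N := hc j hj_pos hjN
    have htc : t < c j := hG.reflect_lt (by rw [hGj, lt_div_iff₀ hN']; linarith)
    calc f t ≤ f (c j) := hf htc.le
      _ ≤ j / N + η := hGj ▸ hclose j hj_pos hjN
      _ ≤ G t + 1 / N + η := by
        have : (j : ℝ) / N ≤ G t + 1 / N := by
          rw [div_le_iff₀ hN', add_mul, one_div_mul_cancel hN'.ne']; linarith
        linarith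
  · have : (N : ℝ) ≤ N * G t + 1 := le_trans (by exact_mod_cast hjN) hj_le
    have : 1 ≤ G t + 1 / N := by
      rw [← sub_le_iff_le_add', le_div_iff₀ hN']; linarith
    linarith [hf1 t]

lemma sub_le_of_grid (hf : Monotone f) (hf0 : ∀ t, 0 ≤ f t) (hG : Monotone G)
    (hG1 : ∀ t, G t ≤ 1) (hN : 0 < N) (hc : ∀ i : ℤ, 0 < i → i < N → G (c i) = i / N)
    (hclose : ∀ i : ℤ, 0 < i → i < N → G (c i) - η ≤ f (c i)) (hη : 0 ≤ η) (t : ℝ) :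
    G t - 1 / N - η ≤ f t := by
  have hN' : (0 : ℝ) < N := Nat.cast_pos.mpr hN
  set i := ⌈N * G t⌉ - 1
  have hi_lt : (i : ℝ) < N * G t := by
    push_cast [i]; linarith [Int.ceil_lt_add_one ((N : ℝ) * G t)]
  have hi_ge : (N : ℝ) * G t ≤ i + 1 := by push_cast [i]; linarith [Int.le_ceil ((N : ℝ) * G t)]
  have hiN : i < N := by
    have : (N : ℝ) * G t ≤ N := mul_le_of_le_one_right hN'.le (hG1 t)
    exact_mod_cast hi_lt.trans_le this
  rcases lt_or_ge 0 i with hi_pos | hi_pos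
  · have hGi : G (c i) = i / N := hc i hi_pos hiN
    have hct : c i < t := hG.reflect_lt (by rw [hGi, div_lt_iff₀ hN']; linarith)
    calc G t - 1 / N - η ≤ i / N - η := by
          have : G t ≤ i / N + 1 / N := by
            rw [← add_div, le_div_iff₀ hN']; linarith
          linarith
      _ ≤ f (c i) := hGi ▸ hclose i hi_pos hiN
      _ ≤ f t := hf hct.le
  · have : (N : ℝ) * G t ≤ 1 := by
      have : (i : ℝ) ≤ 0 := by exact_mod_cast hi_pos
      linarith
    have : G t ≤ 1 / N := by rw [le_div_iff₀ hN']; linarith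
    linarith [hf0 t]

lemma abs_sub_le_of_grid (hf : Monotone f) (hf01 : ∀ t, f t ∈ Icc 0 1) (hG : Monotone G)
    (hG01 : ∀ t, G t ∈ Icc 0 1) (hN : 0 < N) (hc : ∀ i : ℤ, 0 < i → i < N → G (c i) = i / N)
    (hclose : ∀ i : ℤ, 0 < i → i < N → |f (c i) - G (c i)| ≤ η) (hη : 0 ≤ η) (t : ℝ) :
    |f t - G t| ≤ 1 / N + η := by
  have hup := le_add_of_grid hf (fun t => (hf01 t).2) hG (fun t => (hG01 t).1) hN hc
    (fun i h0 hN => by linarith [(abs_le.mp (hclose i h0 hN)).2]) hη t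
  have hlow := sub_le_of_grid hf (fun t => (hf01 t).1) hG (fun t => (hG01 t).2) hN hc
    (fun i h0 hN => by linarith [(abs_le.mp (hclose i h0 hN)).1]) hη t
  rw [abs_sub_le_iff]
  constructor <;> linarith

end Grid

lemma tendsto_measure_zero_of_subset_biUnion {Ω ι α : Type*} [MeasurableSpace Ω]
    {μ : Measure Ω} {l : Filter α} (s : Finset ι) {A : α → Set Ω} {B : ι → α → Set Ω}
    (hAB : ∀ n, A n ⊆ ⋃ i ∈ s, B i n) (hB : ∀ i ∈ s, Tendsto (fun n => μ (B i n)) l (𝓝 0)) :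
    Tendsto (fun n => μ (A n)) l (𝓝 0) := by
  have hsum : Tendsto (fun n => ∑ i ∈ s, μ (B i n)) l (𝓝 0) := by
    simpa using tendsto_finsetSum s hB
  exact tendsto_of_tendsto_of_tendsto_of_le_of_le tendsto_const_nhds hsum (fun _ => zero_le)
    fun n => (measure_mono (hAB n)).trans (measure_biUnion_finset_le s _)

theorem uniform_convergence_of_random_cdfs_general
    {Ω : Type*} [MeasurableSpace Ω] (μ : Measure Ω)
    (F : ℕ → Ω → ℝ → ℝ)
    (hmono : ∀ n ω, Monotone (F n ω))
    (hbot : ∀ n ω, Tendsto (F n ω) atBot (nhds 0))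
    (htop : ∀ n ω, Tendsto (F n ω) atTop (nhds 1))
    (G : ℝ → ℝ) (hGcont : Continuous G) (hGmono : Monotone G)
    (hGbot : Tendsto G atBot (nhds 0)) (hGtop : Tendsto G atTop (nhds 1))
    (hptwise : ∀ x : ℝ, ∀ ε > (0:ℝ),
      Tendsto (fun n => μ {ω | ε < |F n ω x - G x|}) atTop (nhds 0)) :
    ∀ ε > (0:ℝ),
      Tendsto (fun n => μ {ω | ε < ⨆ x : ℝ, |F n ω x - G x|}) atTop (nhds 0) := by
  intro ε hε
  obtain ⟨N, hN⟩ := exists_nat_one_div_lt (half_pos hε)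
  have hlevel : ∀ i : ℤ, 0 < i → i < (N + 1 : ℕ) → ∃ c, G c = i / (N + 1 : ℕ) := fun i h0 hN =>
    Ioo_subset_range_of_tendsto hGcont hGbot hGtop
      ⟨by positivity, (div_lt_one (by positivity)).mpr (by exact_mod_cast hN)⟩
  choose! c hc using hlevel
  refine tendsto_measure_zero_of_subset_biUnion (Finset.Ioo (0 : ℤ) (N + 1 : ℕ))
    (fun n ω hω => ?_) fun i _ => hptwise (c i) (ε / 2) (half_pos hε)
  by_contra hfar
  simp only [mem_iUnion, Finset.mem_Ioo, mem_ofPred_eq, not_exists, not_lt] at hfar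
  have hclose (t : ℝ) : |F n ω t - G t| ≤ 1 / (N + 1 : ℕ) + ε / 2 :=
    abs_sub_le_of_grid (hmono n ω)
      (fun t => ⟨(hmono n ω).le_of_tendsto (hbot n ω) t, (hmono n ω).ge_of_tendsto (htop n ω) t⟩)
      hGmono (fun t => ⟨hGmono.le_of_tendsto hGbot t, hGmono.ge_of_tendsto hGtop t⟩)
      N.succ_pos hc (fun i h0 hN => hfar i ⟨h0, hN⟩) (half_pos hε).le t
  push_cast at hclose
  exact (show ε < _ from hω).not_ge (ciSup_le fun t => (hclose t).trans (by linarith))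

/-- **Lemma B.5**: let `F_n(·, ω)` be random CDFs (non-decreasing, right-continuous,
with limits `0` at `-∞` and `1` at `+∞`) converging pointwise in probability to a
deterministic continuous CDF `G`.  Then `sup_x |F_n(x) - G(x)| → 0` in probability. -/
theorem uniform_convergence_of_random_cdfs
    {Ω : Type*} [MeasurableSpace Ω] (μ : Measure Ω) [IsProbabilityMeasure μ]
    (F : ℕ → Ω → ℝ → ℝ)
    (hmono : ∀ n ω, Monotone (F n ω))
    (hrc : ∀ n ω x, ContinuousWithinAt (F n ω) (Set.Ici x) x)
    (hbot : ∀ n ω, Tendsto (F n ω) atBot (nhds 0))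
    (htop : ∀ n ω, Tendsto (F n ω) atTop (nhds 1))
    (G : ℝ → ℝ) (hGcont : Continuous G) (hGmono : Monotone G)
    (hGbot : Tendsto G atBot (nhds 0)) (hGtop : Tendsto G atTop (nhds 1))
    (hptwise : ∀ x : ℝ, ∀ ε > (0:ℝ),
      Tendsto (fun n => μ {ω | ε < |F n ω x - G x|}) atTop (nhds 0)) :
    ∀ ε > (0:ℝ),
      Tendsto (fun n => μ {ω | ε < ⨆ x : ℝ, |F n ω x - G x|}) atTop (nhds 0) :=
  uniform_convergence_of_random_cdfs_general μ F hmono hbot htop G hGcont hGmono hGbot hGtop hptwise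

end PermTestPaper
end
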